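/- arXiv:2302.01253 — 6 statements merged into one kernel-verified Lean document; each statement's English description precedes it below -/
import Mathlib

section
/- For every nonnegative integer n, the number of 6-regular partitions of n into an even number of parts minus the number of 6-regular partitions of n into an odd number of parts equals (-1)^n times the number of partitions of n into distinct parts none of which is congruent to 2 or 4 modulo 6. -/
open Finset

/-- 6-regular partitions of `n` with an even number of parts. -/
def b6e (n : ℕ) : ℕ :=
  Fintype.card {P : Nat.Partition n // (∀ i ∈ P.parts, ¬ (6 ∣ i)) ∧ Even (Multiset.card P.parts)}

/-- 6-regular partitions of `n` with an odd number of parts. -/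
def b6o (n : ℕ) : ℕ :=
  Fintype.card {P : Nat.Partition n // (∀ i ∈ P.parts, ¬ (6 ∣ i)) ∧ Odd (Multiset.card P.parts)}

/-- Number of partitions of `n` into distinct parts not congruent to ±2 mod 6. -/
def Q2 (n : ℕ) : ℕ :=
  Fintype.card {P : Nat.Partition n // P.parts.Nodup ∧ ∀ i ∈ P.parts, i % 6 ≠ 2 ∧ i % 6 ≠ 4}

/-! Both sides have product generating functions in `ℤ⟦X⟧`:
`∑ (b₆ₑ(n) - b₆ₒ(n)) Xⁿ = ∏_{6 ∤ k} (1 + X^k)⁻¹` and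
`∑ (-1)ⁿ Q₂(n) Xⁿ = ∏_{k odd} (1 - X^k) · ∏_{6 ∣ k} (1 + X^k)`.
Multiplying the first product by Euler's identity `∏_{k odd} (1 - X^k) · ∏_k (1 + X^k) = 1`,
the generating-function form of "odd parts = distinct parts", gives the second factor by factor. -/

open PowerSeries PowerSeries.WithPiTopology

namespace Nat.Partition

variable {R : Type*} [CommSemiring R]

theorem prod_pow_mul_count {n : ℕ} (p : n.Partition) (u : R) :
    ∏ i ∈ p.parts.toFinset, u ^ (i * p.parts.count i) = u ^ n := by
  have h := p.parts_sum
  rw [Finset.sum_multiset_count p.parts] at h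
  simp_rw [prod_pow_eq_pow_sum, mul_comm _ (p.parts.count _), ← smul_eq_mul, h]

variable [TopologicalSpace R] [T2Space R]

theorem hasProd_powerSeriesMk_sum_restricted_pow [IsTopologicalSemiring R]
    (u : R) (P : ℕ → Prop) [DecidablePred P] :
    HasProd (fun i ↦ if P (i + 1) then ∑' j, (u • X ^ (i + 1) : R⟦X⟧) ^ j else 1)
      (PowerSeries.mk fun n ↦ ∑ p ∈ restricted n P, u ^ Multiset.card p.parts) := by
  convert! hasProd_genFun (fun i c ↦ if P i then u ^ c else 0) using 1
  · ext1 i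
    split_ifs
    · have h0 : constantCoeff (u • X ^ (i + 1) : R⟦X⟧) = 0 := by
        rw [PowerSeries.smul_eq_C_mul]; simp
      rw [tsum_eq_zero_add' ?_]
      · simp [smul_pow, pow_mul]
      simp_rw [pow_succ]
      exact (summable_pow_of_constantCoeff_eq_zero h0).mul_right _
    · simp
  · ext n
    simp only [coeff_mk, coeff_genFun, Finsupp.prod, Multiset.toFinsupp_support,
      Multiset.toFinsupp_apply, prod_ite_zero, prod_pow_eq_pow_sum, Multiset.toFinset_sum_count_eq,
      restricted, sum_filter, Multiset.mem_toFinset]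

theorem hasProd_powerSeriesMk_pow_mul_card_nodup_restricted (u : R) (P : ℕ → Prop)
    [DecidablePred P] :
    HasProd (fun i ↦ if P (i + 1) then 1 + u ^ (i + 1) • X ^ (i + 1) else (1 : R⟦X⟧))
      (PowerSeries.mk fun n ↦
        u ^ n * #{p : n.Partition | p.parts.Nodup ∧ ∀ i ∈ p.parts, P i}) := by
  convert! hasProd_genFun (fun i c ↦ if c = 1 ∧ P i then u ^ (i * c) else 0) using 1
  · ext1 i
    rw [tsum_eq_single 0 fun j hj ↦ by simp [hj]]
    by_cases h : P (i + 1) <;> simp [h]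
  · ext n
    simp_rw [coeff_mk, coeff_genFun, Finsupp.prod, prod_ite_zero, Multiset.toFinsupp_support,
      Multiset.toFinsupp_apply, prod_pow_mul_count, ← sum_filter, sum_const, nsmul_eq_mul,
      mul_comm (u ^ n)]
    congr 3
    ext p
    simp [Multiset.nodup_iff_count_eq_one, forall_and]

end Nat.Partition

open Nat.Partition

section EulerFactors

variable {R : Type*} [CommRing R] [TopologicalSpace R] [IsTopologicalRing R] [T2Space R]

theorem hasProd_odd_one_sub_X_pow_mul_one_add_X_pow :
    HasProd
      (fun i ↦ (if ¬Even (i + 1) then 1 - X ^ (i + 1) else 1) * (1 + X ^ (i + 1) : R⟦X⟧)) 1 := by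
  have hO : Multipliable fun i ↦ (if ¬Even (i + 1) then 1 - X ^ (i + 1) else 1 : R⟦X⟧) := by
    refine ((hasProd_powerSeriesMk_pow_mul_card_nodup_restricted (-1 : R) (¬Even ·)).congr_fun
      fun i ↦ ?_).multipliable
    by_cases h : Even (i + 1)
    · simp [h]
    · simp [h, (Nat.not_even_iff_odd.mp h).neg_one_pow, sub_eq_add_neg]
  have hOE : (∏' i, (if ¬Even (i + 1) then 1 - X ^ (i + 1) else 1 : R⟦X⟧)) *
      PowerSeries.mk (fun n ↦ (#(odds n) : R)) = 1 := by
    refine ((hO.hasProd.mul (hasProd_powerSeriesMk_card_restricted R _)).congr_fun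
      fun i ↦ ?_).unique hasProd_one
    by_cases h : Even (i + 1)
    · simp [h]
    · simp only [h, not_false_eq_true, if_true, pow_mul]
      rw [one_sub_mul_tsum_pow_of_constantCoeff_eq_zero (by simp)]
  -- `∏ (1 + X^k)` generates distinct partitions, which Euler's theorem equates with odd ones.
  have hD := hasProd_powerSeriesMk_card_countRestricted R (m := 2) (by norm_num)
  simp only [countRestricted_two, ← card_odds_eq_card_distincts] at hD
  have hOD := hO.hasProd.mul hD
  rw [hOE] at hOD
  exact hOD.congr_fun fun i ↦ by simp [sum_range_succ]

theorem factor_eq_euler_factor_mul_regular_factor (k : ℕ) :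
    (if k % 6 ≠ 2 ∧ k % 6 ≠ 4 then 1 + (-1 : R) ^ k • X ^ k else 1) =
      (if ¬Even k then 1 - X ^ k else 1) * (1 + X ^ k) *
        (if ¬6 ∣ k then ∑' j, ((-1 : R) • X ^ k : R⟦X⟧) ^ j else 1) := by
  by_cases h6 : 6 ∣ k
  · have hk : Even k := even_iff_two_dvd.mpr (dvd_trans (by norm_num) h6)
    have hmod : k % 6 ≠ 2 ∧ k % 6 ≠ 4 := by omega
    simp [h6, hk, hmod, hk.neg_one_pow]
  have hgeom : (1 + X ^ k) * ∑' j, (-X ^ k : R⟦X⟧) ^ j = 1 := by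
    rw [← sub_neg_eq_add, one_sub_mul_tsum_pow_of_constantCoeff_eq_zero]
    simp [show k ≠ 0 by omega]
  by_cases hk : Even k
  · have hmod : ¬(k % 6 ≠ 2 ∧ k % 6 ≠ 4) := by rw [Nat.even_iff] at hk; omega
    simp [h6, hk, hmod, hgeom]
  · have hmod : k % 6 ≠ 2 ∧ k % 6 ≠ 4 := by rw [Nat.even_iff] at hk; omega
    simp [h6, hk, hmod, mul_assoc, hgeom, (Nat.not_even_iff_odd.mp hk).neg_one_pow, sub_eq_add_neg]

end EulerFactors

theorem b6e_sub_b6o_eq_sum (n : ℕ) :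
    (b6e n : ℤ) - b6o n = ∑ p ∈ restricted n (¬ 6 ∣ ·), (-1) ^ Multiset.card p.parts := by
  rw [← sum_filter_add_sum_filter_not _ (fun p ↦ Even (Multiset.card p.parts)),
    sum_congr rfl fun p hp ↦ (mem_filter.mp hp).2.neg_one_pow,
    sum_congr rfl fun p hp ↦ (Nat.not_even_iff_odd.mp (mem_filter.mp hp).2).neg_one_pow]
  simp only [b6e, b6o, Fintype.card_subtype, restricted, filter_filter, sum_const,
    Nat.not_even_iff_odd, nsmul_eq_mul, mul_one, mul_neg, sub_eq_add_neg]

theorem powerSeriesMk_b6e_sub_b6o_eq :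
    (PowerSeries.mk fun n ↦ (b6e n : ℤ) - b6o n) =
      PowerSeries.mk fun n ↦ (-1) ^ n * (Q2 n : ℤ) := by
  have hA := hasProd_powerSeriesMk_sum_restricted_pow (-1 : ℤ) (¬ 6 ∣ ·)
  have hB := hasProd_powerSeriesMk_pow_mul_card_nodup_restricted (-1 : ℤ)
    (fun i ↦ i % 6 ≠ 2 ∧ i % 6 ≠ 4)
  simp_rw [← b6e_sub_b6o_eq_sum] at hA
  simp_rw [Q2, Fintype.card_subtype]
  have hEA := (hasProd_odd_one_sub_X_pow_mul_one_add_X_pow.mul hA).congr_fun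
    fun i ↦ factor_eq_euler_factor_mul_regular_factor (i + 1)
  rw [one_mul] at hEA
  exact hEA.unique hB

theorem stmt0 (n : ℕ) :
    (b6e n : ℤ) - (b6o n : ℤ) = (-1) ^ n * (Q2 n : ℤ) := by
  simpa using congrArg (coeff n) powerSeriesMk_b6e_sub_b6o_eq
end

section
/- For every nonnegative integer n, the number of partitions of n into distinct parts not congruent to ±2 modulo 6 has the same parity as the number of 6-regular partitions of n. -/
open Finset

/-- Number of 6-regular partitions of `n` (no part divisible by 6). -/
def b6 (n : ℕ) : ℕ := Fintype.card {P : Nat.Partition n // ∀ i ∈ P.parts, ¬ (6 ∣ i)}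

/-!
Compare generating functions over `ZMod 2`. Write `D_s = ∏_{k ∈ s} (1 + X^k)` for a set `s` of
positive integers. The series of `Q2` is `D_odd · D_{6 ∣ k}`, and since `1 - X^k = 1 + X^k` in
characteristic two, the series of `b6` is `∏_{6 ∤ k} 1/(1 - X^k) = 1 / D_{6 ∤ k}`. As
`D_{6 ∣ k} · D_{6 ∤ k} = D_{k > 0}`, it remains to see `D_odd · D_{k > 0} = 1`: by Frobenius
`D_even = D_{k > 0}²`, so `D_{k > 0} = D_odd · D_{k > 0}²`, and `D_{k > 0}` is a unit.
-/

open PowerSeries PowerSeries.WithPiTopology Nat.Partition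

theorem hasProd_mulIndicator_succ_iff {M : Type*} [CommMonoid M] [TopologicalSpace M]
    {s : Set ℕ} (hs : 0 ∉ s) (f : ℕ → M) {a : M} :
    HasProd (fun i ↦ s.mulIndicator f (i + 1)) a ↔ HasProd (s.mulIndicator f) a := by
  refine (add_left_injective 1).hasProd_iff (f := s.mulIndicator f) fun k hk ↦ ?_
  obtain rfl : k = 0 := by
    by_contra h
    exact hk ⟨k - 1, Nat.sub_add_cancel (Nat.pos_of_ne_zero h)⟩
  exact Set.mulIndicator_of_notMem hs f

instance PowerSeries.instCharP {R : Type*} [CommSemiring R] (p : ℕ) [CharP R p] :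
    CharP R⟦X⟧ p :=
  charP_of_injective_ringHom C_injective p

section Semiring

variable {R : Type*} [CommSemiring R] [TopologicalSpace R]

theorem multipliable_mulIndicator_one_add_X_pow (s : Set ℕ) :
    Multipliable (s.mulIndicator fun k ↦ (1 + X ^ k : R⟦X⟧)) := by
  nontriviality R
  have hs : (s.mulIndicator fun k ↦ (1 + X ^ k : R⟦X⟧)) =
      fun k ↦ 1 + s.indicator (fun k ↦ (X : R⟦X⟧) ^ k) k := by
    ext1 k
    by_cases hk : k ∈ s <;> simp [hk]
  rw [hs]
  refine multipliable_one_add_of_tendsto_order_atTop_nhds_top (R := R)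
    (f := fun k ↦ s.indicator (fun k ↦ (X : R⟦X⟧) ^ k) k) ?_
  refine ENat.tendsto_nhds_top_iff_natCast_lt.mpr fun n ↦ Filter.eventually_atTop.mpr ⟨n + 1, ?_⟩
  intro k hk
  by_cases hks : k ∈ s
  · simp only [Set.indicator_of_mem hks, order_X_pow]
    exact_mod_cast hk
  · simp [Set.indicator_of_notMem hks]

noncomputable def prodOneAddXPow (s : Set ℕ) : R⟦X⟧ :=
  ∏' k, s.mulIndicator (fun k ↦ 1 + X ^ k) k

variable [T2Space R]

theorem Nat.Partition.hasProd_powerSeriesMk_card_restricted_inter_distincts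
    (p : ℕ → Prop) [DecidablePred p] :
    HasProd ({k | 0 < k ∧ p k}.mulIndicator fun k ↦ (1 + X ^ k : R⟦X⟧))
      (PowerSeries.mk fun n ↦ (#(restricted n p ∩ distincts n) : R)) := by
  rw [← hasProd_mulIndicator_succ_iff (by simp)]
  convert! hasProd_genFun (fun i c ↦ if c < 2 ∧ p i then (1 : R) else 0) using 1
  · ext1 i
    rw [tsum_eq_single 0 (fun j hj ↦ by simp [hj])]
    by_cases hi : p (i + 1) <;> simp [hi]
  · simp_rw [genFun, restricted, distincts, ← filter_and, card_filter, Finsupp.prod, prod_boole]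
    simp only [Nat.cast_sum, Nat.cast_ite, Nat.cast_one, Nat.cast_zero]
    congr! 4 with n x
    simp only [Multiset.toFinsupp_support, Multiset.mem_toFinset, Multiset.toFinsupp_apply,
      Multiset.nodup_iff_count_le_one]
    grind [Multiset.count_eq_zero]

theorem constantCoeff_prodOneAddXPow {s : Set ℕ} (hs : 0 ∉ s) :
    constantCoeff (prodOneAddXPow s : R⟦X⟧) = 1 := by
  rw [prodOneAddXPow, (multipliable_mulIndicator_one_add_X_pow s).map_tprod _
    (continuous_constantCoeff R)]
  convert tprod_one with k
  by_cases hk : k ∈ s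
  · have : k ≠ 0 := fun h ↦ hs (h ▸ hk)
    simp [hk, this]
  · simp [hk]

variable [IsTopologicalSemiring R]

theorem prodOneAddXPow_union {s t : Set ℕ} (h : Disjoint s t) :
    prodOneAddXPow (s ∪ t) = (prodOneAddXPow s * prodOneAddXPow t : R⟦X⟧) := by
  simp_rw [prodOneAddXPow, Set.mulIndicator_union_of_disjoint h]
  exact (multipliable_mulIndicator_one_add_X_pow s).tprod_mul
    (multipliable_mulIndicator_one_add_X_pow t)

variable [CharP R 2]

theorem prodOneAddXPow_image_two_mul (s : Set ℕ) :
    prodOneAddXPow ((2 * ·) '' s) = (prodOneAddXPow s ^ 2 : R⟦X⟧) := by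
  have hinj : Function.Injective (2 * · : ℕ → ℕ) := fun a b h ↦ by simpa using h
  rw [prodOneAddXPow, prodOneAddXPow, ← (multipliable_mulIndicator_one_add_X_pow s).tprod_pow,
    ← hinj.tprod_eq]
  · refine tprod_congr fun k ↦ ?_
    rw [Set.mulIndicator_image hinj]
    by_cases hk : k ∈ s
    · simp [hk, CharTwo.add_sq, pow_mul']
    · simp [hk]
  · exact Set.mulSupport_mulIndicator_subset.trans (Set.image_subset_range _ _)

end Semiring

section Ring

variable {R : Type*} [CommRing R] [TopologicalSpace R] [IsTopologicalRing R] [T2Space R]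
  [CharP R 2]

theorem prodOneAddXPow_odd_mul_prodOneAddXPow_pos :
    prodOneAddXPow {k | Odd k} * prodOneAddXPow {k | 0 < k} = (1 : R⟦X⟧) := by
  have hsplit : {k | 0 < k} = {k | Odd k} ∪ (2 * ·) '' {k | 0 < k} := by
    ext k
    simp only [Set.mem_ofPred_eq, Set.mem_union, Set.mem_image]
    constructor
    · intro hk
      rcases Nat.even_or_odd' k with ⟨m, rfl | rfl⟩
      · exact Or.inr ⟨m, by omega, rfl⟩
      · exact Or.inl (odd_two_mul_add_one m)
    · rintro (h | ⟨m, hm, rfl⟩)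
      · exact h.pos
      · omega
  have hdisj : Disjoint {k | Odd k} ((2 * ·) '' {k | 0 < k}) := by
    rw [Set.disjoint_left]
    rintro _ hodd ⟨m, -, rfl⟩
    exact Nat.not_odd_iff_even.mpr (even_two_mul m) hodd
  have hunit : IsUnit (prodOneAddXPow {k | 0 < k} : R⟦X⟧) := by
    rw [isUnit_iff_constantCoeff, constantCoeff_prodOneAddXPow (by simp)]
    exact isUnit_one
  have hfrob : prodOneAddXPow {k | 0 < k} =
      prodOneAddXPow {k | Odd k} * (prodOneAddXPow {k | 0 < k} ^ 2 : R⟦X⟧) := by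
    nth_rw 1 [hsplit]
    rw [prodOneAddXPow_union hdisj, prodOneAddXPow_image_two_mul]
  refine hunit.mul_left_cancel ?_
  linear_combination -hfrob

theorem Nat.Partition.powerSeriesMk_card_restricted_mul_prodOneAddXPow
    (p : ℕ → Prop) [DecidablePred p] :
    PowerSeries.mk (fun n ↦ (#(restricted n p) : R)) * prodOneAddXPow {k | 0 < k ∧ p k} = 1 := by
  have h : HasProd ({k | 0 < k ∧ p k}.mulIndicator fun k ↦ ∑' j : ℕ, (X : R⟦X⟧) ^ (k * j))
      (PowerSeries.mk fun n ↦ (#(restricted n p) : R)) := by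
    rw [← hasProd_mulIndicator_succ_iff (by simp)]
    convert hasProd_powerSeriesMk_card_restricted R p using 2 with i
    · rfl
    · by_cases hi : p (i + 1) <;> simp [Set.mulIndicator, hi]
  rw [← h.tprod_eq, prodOneAddXPow, ← h.multipliable.tprod_mul
    (multipliable_mulIndicator_one_add_X_pow _)]
  refine (tprod_congr fun k ↦ ?_).trans tprod_one
  by_cases hk : k ∈ {k | 0 < k ∧ p k}
  · rw [Set.mulIndicator_of_mem hk, Set.mulIndicator_of_mem hk]
    simp_rw [pow_mul, ← CharTwo.sub_eq_add]
    exact tsum_pow_mul_one_sub_of_constantCoeff_eq_zero (by simp [hk.1.ne'])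
  · rw [Set.mulIndicator_of_notMem hk, Set.mulIndicator_of_notMem hk, one_mul]

end Ring

theorem b6_eq_card_restricted (n : ℕ) : b6 n = #(restricted n (¬ 6 ∣ ·)) :=
  Fintype.card_subtype _

theorem Q2_eq_card_restricted_inter_distincts (n : ℕ) :
    Q2 n = #(restricted n (fun k ↦ k % 6 ≠ 2 ∧ k % 6 ≠ 4) ∩ distincts n) := by
  rw [Q2, Fintype.card_subtype, restricted, distincts, ← filter_and]
  simp only [and_comm]

theorem powerSeriesMk_Q2_mul_prodOneAddXPow :
    PowerSeries.mk (fun n ↦ (Q2 n : ZMod 2)) * prodOneAddXPow {k | 0 < k ∧ ¬ 6 ∣ k} = 1 := by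
  have hodd : {k | 0 < k ∧ (k % 6 ≠ 2 ∧ k % 6 ≠ 4)} = {k | Odd k} ∪ {k | 0 < k ∧ 6 ∣ k} := by
    ext k
    simp only [Set.mem_ofPred_eq, Set.mem_union, Nat.odd_iff]
    omega
  have hpos : {k | 0 < k ∧ 6 ∣ k} ∪ {k | 0 < k ∧ ¬ 6 ∣ k} = {k | 0 < k} := by
    ext k
    simp only [Set.mem_ofPred_eq, Set.mem_union]
    tauto
  simp_rw [Q2_eq_card_restricted_inter_distincts,
    ← (hasProd_powerSeriesMk_card_restricted_inter_distincts _).tprod_eq]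
  rw [← prodOneAddXPow, hodd, prodOneAddXPow_union, mul_assoc, ← prodOneAddXPow_union, hpos,
    prodOneAddXPow_odd_mul_prodOneAddXPow_pos]
  · exact Set.disjoint_left.mpr fun k hk hk' ↦ hk'.2 hk.2
  · exact Set.disjoint_left.mpr fun k hk hk' ↦ by
      simp only [Set.mem_ofPred_eq, Nat.odd_iff] at hk hk'
      omega

theorem powerSeriesMk_b6_mul_prodOneAddXPow :
    PowerSeries.mk (fun n ↦ (b6 n : ZMod 2)) * prodOneAddXPow {k | 0 < k ∧ ¬ 6 ∣ k} = 1 := by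
  simp_rw [b6_eq_card_restricted]
  exact powerSeriesMk_card_restricted_mul_prodOneAddXPow _

theorem stmt1 (n : ℕ) : Q2 n % 2 = b6 n % 2 := by
  have hgen := left_inv_eq_right_inv powerSeriesMk_Q2_mul_prodOneAddXPow
    ((mul_comm _ _).trans powerSeriesMk_b6_mul_prodOneAddXPow)
  have hcoeff := congrArg (coeff n) hgen
  simp only [coeff_mk] at hcoeff
  exact (ZMod.natCast_eq_natCast_iff' _ _ 2).mp hcoeff
end

section
/- For all nonnegative integers n, Σ_{j ∈ ℤ} (-1)^j b_6(n - j(3j-1)/2) equals (-1)^k if n = 3k(3k-1) for some integer k, and equals 0 otherwise; here b_6(x) = 0 for x negative. -/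
open Finset

/-- `b6` extended to integers, `0` on negatives. -/
def b6z (x : ℤ) : ℤ := if 0 ≤ x then b6 x.toNat else 0

/-!
Write `E = ∏ (1 - Xⁱ) = ∑ₖ (-1)ᵏ X^{k(3k-1)/2}` (Euler's pentagonal number theorem). By Glaisher,
the generating function of partitions with no part divisible by `m` is `∏ (1 + Xⁱ + ⋯ + X^{(m-1)i})`,
so multiplying it by `E` telescopes each factor to `1 - X^{mi}` and leaves `E(X^m)`. Comparing
coefficients of `Xⁿ` for `m = 6` gives the theorem, since `6 · k(3k-1)/2 = 3k(3k-1)`.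
-/

open PowerSeries PowerSeries.WithPiTopology Nat.Partition

theorem natAbs_le_pentagonal (k : ℤ) : k.natAbs ≤ pentagonal k := by
  have := two_mul_natCast_pentagonal k
  zify
  rcases le_or_gt 0 k with hk | hk
  · nlinarith [abs_of_nonneg hk]
  · nlinarith [abs_of_neg hk]

theorem six_mul_pentagonal (k : ℤ) : ((6 * pentagonal k : ℕ) : ℤ) = 3 * k * (3 * k - 1) := by
  push_cast
  linear_combination 3 * two_mul_natCast_pentagonal k

theorem coe_negOnePow_eq_neg_one_pow_natAbs (k : ℤ) : (k.negOnePow : ℤ) = (-1) ^ k.natAbs := by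
  rw [← Int.negOnePow_abs, ← Int.natCast_natAbs, Int.coe_negOnePow_natCast]

section PowerSeries

variable (R : Type*) [CommRing R]

theorem hasProd_one_sub_X_pow_mul [TopologicalSpace R] {m : ℕ} (hm : m ≠ 0) :
    HasProd (fun i ↦ (1 - X ^ ((i + 1) * m) : R⟦X⟧)) (expand m hm (pentagonalSeries R)) := by
  rw [HasProd, tendsto_iff_coeff_tendsto]
  intro n
  apply tendsto_nhds_of_eventually_eq
  have hexpand (s : Finset ℕ) :
      ∏ i ∈ s, (1 - X ^ ((i + 1) * m) : R⟦X⟧) = expand m hm (∏ i ∈ s, (1 - X ^ (i + 1))) := by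
    simp [map_prod, ← pow_mul, mul_comm]
  simp_rw [hexpand, coeff_expand]
  split_ifs
  · exact coeff_prod_one_sub_X_pow_eventually_eq R (n / m)
  · simp

theorem powerSeriesMk_card_restricted_not_dvd_mul_pentagonalSeries [NoZeroDivisors R] {m : ℕ}
    (hm : 0 < m) :
    (PowerSeries.mk fun n ↦ (#(restricted n (¬ m ∣ ·)) : R)) * pentagonalSeries R =
      expand m hm.ne' (pentagonalSeries R) := by
  let _ : TopologicalSpace R := ⊥
  have _ : DiscreteTopology R := ⟨rfl⟩
  rw [← (hasProd_one_sub_X_pow_mul R hm.ne').tprod_eq,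
    powerSeriesMk_card_restricted_eq_powerSeriesMk_card_countRestricted R hm,
    powerSeriesMk_card_countRestricted_eq_tprod R hm, ← tprod_one_sub_X_pow R,
    ← (multipliable_powerSeriesMk_card_countRestricted R m).tprod_mul
      (multipliable_one_sub_X_pow R)]
  exact tprod_congr fun i ↦ by simp_rw [pow_mul, geom_sum_mul_neg]

theorem coeff_mul_pentagonalSeries (f : R⟦X⟧) (n : ℕ) :
    coeff n (f * pentagonalSeries R) = ∑ k ∈ Icc (-(n : ℤ) - 1) (n + 1),
      (k.negOnePow : R) * if pentagonal k ≤ n then coeff (n - pentagonal k) f else 0 := by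
  let _ : TopologicalSpace R := ⊥
  have _ : DiscreteTopology R := ⟨rfl⟩
  have hterm (k : ℤ) : coeff n (f * ((k.negOnePow : R⟦X⟧) * X ^ pentagonal k)) =
      (k.negOnePow : R) * if pentagonal k ≤ n then coeff (n - pentagonal k) f else 0 := by
    rw [mul_left_comm, ← map_intCast (C (R := R)), coeff_C_mul, coeff_mul_X_pow']
  have h := ((hasSum_pentagonalSeries R).mul_left f).map (coeff n) (continuous_coeff R n)
  simp only [Function.comp_def, hterm] at h
  refine h.unique (hasSum_sum_of_ne_finset_zero fun k hk ↦ ?_)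
  have : n < pentagonal k := by
    have := natAbs_le_pentagonal k
    rw [mem_Icc] at hk
    omega
  simp [this.not_ge]

end PowerSeries

theorem b6z_natCast_sub (n p : ℕ) :
    b6z ((n : ℤ) - p) = if p ≤ n then (b6 (n - p) : ℤ) else 0 := by
  by_cases h : p ≤ n
  · have hsub : ((n : ℤ) - p).toNat = n - p := by omega
    rw [b6z, if_pos (by omega), if_pos h, hsub]
  · rw [b6z, if_neg (by omega), if_neg h]

theorem sum_neg_one_pow_mul_b6z (n : ℕ) :
    ∑ j ∈ Icc (-(n : ℤ) - 1) (n + 1), (-1) ^ j.natAbs * b6z (n - j * (3 * j - 1) / 2) =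
      coeff n (expand 6 (by norm_num) (pentagonalSeries ℤ)) := by
  rw [← powerSeriesMk_card_restricted_not_dvd_mul_pentagonalSeries ℤ (by norm_num : 0 < 6),
    coeff_mul_pentagonalSeries]
  refine sum_congr rfl fun j _ ↦ ?_
  rw [← natCast_pentagonal, b6z_natCast_sub, coe_negOnePow_eq_neg_one_pow_natAbs,
    b6_eq_card_restricted, coeff_mk, Int.cast_id]

theorem stmt6 (n : ℕ) :
    (∀ k : ℤ, (n : ℤ) = 3 * k * (3 * k - 1) →
      ∑ j ∈ Finset.Icc (-(n : ℤ) - 1) ((n : ℤ) + 1),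
        (-1) ^ j.natAbs * b6z ((n : ℤ) - j * (3 * j - 1) / 2) = (-1) ^ k.natAbs) ∧
    ((¬ ∃ k : ℤ, (n : ℤ) = 3 * k * (3 * k - 1)) →
      ∑ j ∈ Finset.Icc (-(n : ℤ) - 1) ((n : ℤ) + 1),
        (-1) ^ j.natAbs * b6z ((n : ℤ) - j * (3 * j - 1) / 2) = 0) := by
  simp_rw [sum_neg_one_pow_mul_b6z]
  refine ⟨fun k hk ↦ ?_, fun hn ↦ ?_⟩
  · obtain rfl : n = 6 * pentagonal k := by rw [← six_mul_pentagonal] at hk; exact_mod_cast hk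
    rw [coeff_expand_mul, coeff_pentagonalSeries_pentagonal, Int.cast_id,
      coe_negOnePow_eq_neg_one_pow_natAbs]
  · by_cases h6 : 6 ∣ n
    · obtain ⟨q, rfl⟩ := h6
      rw [coeff_expand_mul]
      refine coeff_pentagonalSeries_eq_zero ℤ fun ⟨k, hk⟩ ↦ hn ⟨k, ?_⟩
      rw [← six_mul_pentagonal, hk]
    · exact coeff_expand_of_not_dvd _ _ _ h6
end

section
/- For every nonnegative integer n, Σ_{j ∈ ℤ} (-1)^j Q_2(n - 3j(3j-1)/2) equals 1 if n = k(3k-2) for some integer k, and 0 otherwise; here Q_2(x) = 0 for x negative. -/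
/-!
Since `∑ Q₂(m) xᵐ = ∏ (1 + xᵛ)` over `v ≢ ±2 (mod 6)`, and Euler's pentagonal theorem in `x³`
reads `∏ (1 - x³ᵐ) = ∑ⱼ (-1)ʲ x^(3j(3j-1)/2)`, the left-hand side is the `n`-th coefficient of
`∏ (1 + xᵛ) · ∏ (1 - x³ᵐ)`. The parts `v ≡ 0, 3 (mod 6)` are exactly the multiples `3m`, and
pairing `(1 + x³ᵐ)(1 - x³ᵐ) = 1 - x⁶ᵐ` turns this product into `∏ (1 - x⁶ᵐ)(1 + x⁶ᵐ⁻⁵)(1 + x⁶ᵐ⁻¹)`,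
which by the Jacobi triple product is `∑ₖ x^(k(3k-2))`.

Both the pentagonal theorem and the last identity are read off from a finite Jacobi triple
product, proved with the Cauchy q-binomial theorem and the q-Vandermonde identity; the infinite
products are replaced by finite ones, which agree with them modulo `x^(n+1)`.
-/

open Finset

/-- `Q2` extended to integers, `0` on negatives. -/
def Q2z (x : ℤ) : ℤ := if 0 ≤ x then Q2 x.toNat else 0


variable {R : Type*} [CommRing R]

def qBinom (q : R) : ℕ → ℕ → R
  | _, 0 => 1
  | 0, _ + 1 => 0
  | m + 1, r + 1 => qBinom q m (r + 1) + q ^ (m - r) * qBinom q m r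

section QBinom

variable (q : R)

@[simp] lemma qBinom_zero_right (m : ℕ) : qBinom q m 0 = 1 := by cases m <;> rfl

@[simp] lemma qBinom_zero_succ (r : ℕ) : qBinom q 0 (r + 1) = 0 := rfl

lemma qBinom_succ_succ (m r : ℕ) :
    qBinom q (m + 1) (r + 1) = qBinom q m (r + 1) + q ^ (m - r) * qBinom q m r := rfl

lemma qBinom_eq_zero_of_lt : ∀ {m r : ℕ}, m < r → qBinom q m r = 0
  | 0, _ + 1, _ => rfl
  | m + 1, r + 1, h => by
    rw [qBinom_succ_succ, qBinom_eq_zero_of_lt (by omega), qBinom_eq_zero_of_lt (by omega),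
      mul_zero, add_zero]

@[simp] lemma qBinom_self : ∀ m, qBinom q m m = 1
  | 0 => rfl
  | m + 1 => by
    rw [qBinom_succ_succ, qBinom_eq_zero_of_lt q (by omega), qBinom_self m, Nat.sub_self]
    ring

lemma qBinom_succ_one (m : ℕ) : qBinom q (m + 1) 1 = q * qBinom q m 1 + 1 := by
  induction m with
  | zero => simp
  | succ m ih =>
    have e : qBinom q (m + 1) 1 = qBinom q m 1 + q ^ m := by simp [qBinom_succ_succ]
    rw [qBinom_succ_succ, qBinom_zero_right, Nat.sub_zero]
    linear_combination ih - q * e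

lemma qBinom_succ_succ' : ∀ m r,
    qBinom q (m + 1) (r + 1) = q ^ (r + 1) * qBinom q m (r + 1) + qBinom q m r
  | m, 0 => by rw [qBinom_succ_one, qBinom_zero_right, pow_one]
  | 0, r + 1 => by simp [qBinom_succ_succ]
  | m + 1, r + 1 => by
    rcases lt_trichotomy m r with h | rfl | h
    · simp only [qBinom_eq_zero_of_lt q (show m + 1 < r + 1 + 1 by omega),
        qBinom_eq_zero_of_lt q (show m + 1 < r + 1 by omega),
        qBinom_eq_zero_of_lt q (show m + 1 + 1 < r + 1 + 1 by omega)]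
      ring
    · rw [qBinom_self, qBinom_eq_zero_of_lt q (by omega), qBinom_self]; ring
    · have hm : m + 1 - (r + 1) = m - r := by omega
      have hq₁ : q ^ (m - r) * q ^ (r + 1) = q ^ (m + 1) := by rw [← pow_add]; congr 1; omega
      have hq₂ : q ^ (r + 1 + 1) * q ^ (m - (r + 1)) = q ^ (m + 1) := by
        rw [← pow_add]; congr 1; omega
      rw [qBinom_succ_succ q (m + 1) (r + 1), hm]
      linear_combination qBinom_succ_succ' m (r + 1)
        - q ^ (r + 1 + 1) * qBinom_succ_succ q m (r + 1) + q ^ (m - r) * qBinom_succ_succ' m r - qBinom_succ_succ q m r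
        + qBinom q m (r + 1) * (hq₁ - hq₂)

lemma qBinom_symm : ∀ {m r : ℕ}, r ≤ m → qBinom q m (m - r) = qBinom q m r
  | _, 0, _ => by simp
  | m + 1, r + 1, h => by
    rcases Nat.eq_or_lt_of_le h with h | h
    · rw [← h]; simp
    · obtain ⟨d, rfl⟩ : ∃ d, m = r + 1 + d := ⟨m - (r + 1), by omega⟩
      have h₁ : qBinom q (r + 1 + d) (d + 1) = qBinom q (r + 1 + d) r := by
        rw [← qBinom_symm (r := d + 1) (by omega), show r + 1 + d - (d + 1) = r by omega]
      have h₂ : qBinom q (r + 1 + d) d = qBinom q (r + 1 + d) (r + 1) := by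
        rw [← qBinom_symm (r := d) (by omega), show r + 1 + d - d = r + 1 by omega]
      rw [show r + 1 + d + 1 - (r + 1) = d + 1 by omega, qBinom_succ_succ', qBinom_succ_succ,
        h₁, h₂, show r + 1 + d - r = d + 1 by omega]
      ring

/-- The q-Vandermonde identity. -/
lemma qBinom_add (m : ℕ) : ∀ n r, qBinom q (m + n) r =
    ∑ j ∈ range (r + 1), q ^ ((m - j) * (r - j)) * qBinom q m j * qBinom q n (r - j) := by
  intro n
  induction n with
  | zero =>
    intro r
    rw [sum_eq_single_of_mem r (self_mem_range_succ r)]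
    · simp
    · intro j hj hne
      rw [show r - j = r - j - 1 + 1 by rw [mem_range] at hj; omega, qBinom_zero_succ, mul_zero]
  | succ n ih =>
    rintro (_ | t)
    · simp
    have hsplit : ∀ j ∈ range (t + 1),
        q ^ ((m - j) * (t + 1 - j)) * qBinom q m j * qBinom q (n + 1) (t + 1 - j)
          = q ^ ((m - j) * (t + 1 - j)) * qBinom q m j * qBinom q n (t + 1 - j)
            + q ^ (m + n - t) * (q ^ ((m - j) * (t - j)) * qBinom q m j * qBinom q n (t - j)) := by
      intro j hj
      rw [mem_range] at hj
      rw [show t + 1 - j = t - j + 1 by omega, qBinom_succ_succ]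
      rcases le_or_gt j m with hjm | hjm
      · rcases le_or_gt (t - j) n with htn | htn
        · have hexp : (m - j) * (t - j + 1) + (n - (t - j)) = m + n - t + (m - j) * (t - j) := by
            rw [Nat.mul_succ]; omega
          have hq : q ^ ((m - j) * (t - j + 1)) * q ^ (n - (t - j))
              = q ^ (m + n - t) * q ^ ((m - j) * (t - j)) := by rw [← pow_add, ← pow_add, hexp]
          linear_combination (qBinom q m j * qBinom q n (t - j)) * hq
        · rw [qBinom_eq_zero_of_lt q htn]; ring
      · rw [qBinom_eq_zero_of_lt q hjm]; ring
    rw [← add_assoc, qBinom_succ_succ, ih, ih, sum_range_succ, sum_range_succ _ (t + 1),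
      sum_congr rfl hsplit, sum_add_distrib, ← mul_sum]
    simp only [tsub_self, mul_zero, pow_zero, one_mul, qBinom_zero_right, mul_one]
    ring

lemma prod_one_sub_pow_mul_qBinom : ∀ a b,
    (∏ i ∈ range a, (1 - q ^ (i + 1))) * qBinom q (a + b) a = ∏ i ∈ range a, (1 - q ^ (b + i + 1))
  | 0, b => by simp
  | t + 1, 0 => by simp
  | t + 1, b + 1 => by
    have hpascal : qBinom q (t + 1 + (b + 1)) (t + 1)
        = qBinom q (t + 1 + b) (t + 1) + q ^ (b + 1) * qBinom q (t + (b + 1)) t := by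
      rw [show t + 1 + (b + 1) = t + 1 + b + 1 by omega, qBinom_succ_succ,
        show t + 1 + b - t = b + 1 by omega, show t + 1 + b = t + (b + 1) by omega]
    rw [hpascal, mul_add, prod_one_sub_pow_mul_qBinom (t + 1) b,
      prod_range_succ (fun i => 1 - q ^ (i + 1)) t, prod_range_succ' (fun i => 1 - q ^ (b + i + 1)),
      prod_range_succ (fun i => 1 - q ^ (b + 1 + i + 1))]
    have hshift : ∏ i ∈ range t, (1 - q ^ (b + (i + 1) + 1))
        = ∏ i ∈ range t, (1 - q ^ (b + 1 + i + 1)) :=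
      prod_congr rfl fun i _ => by rw [show b + (i + 1) + 1 = b + 1 + i + 1 by omega]
    rw [hshift]
    linear_combination ((1 - q ^ (t + 1)) * q ^ (b + 1)) * prod_one_sub_pow_mul_qBinom t (b + 1)

lemma succ_choose_two (c : ℕ) : (c + 1).choose 2 = c + c.choose 2 := by
  rw [Nat.choose_succ_succ', Nat.choose_one_right]

/-- The Cauchy q-binomial theorem. -/
lemma prod_one_add_mul_pow (z : R) (m : ℕ) :
    ∏ i ∈ range m, (1 + z * q ^ i)
      = ∑ r ∈ range (m + 1), q ^ r.choose 2 * qBinom q m r * z ^ r := by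
  induction m with
  | zero => simp
  | succ m ih =>
    have hsplit : ∀ s ∈ range (m + 1),
        q ^ (s + 1).choose 2 * qBinom q (m + 1) (s + 1) * z ^ (s + 1)
          = q ^ (s + 1).choose 2 * qBinom q m (s + 1) * z ^ (s + 1)
            + q ^ s.choose 2 * qBinom q m s * z ^ s * (z * q ^ m) := by
      intro s hs
      rw [mem_range] at hs
      rw [qBinom_succ_succ, succ_choose_two, show m = s + (m - s) by omega, Nat.add_sub_cancel_left]
      ring
    rw [prod_range_succ, ih, sum_range_succ' _ (m + 1), sum_congr rfl hsplit, sum_add_distrib,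
      ← sum_mul,
      sum_range_succ (fun x => q ^ (x + 1).choose 2 * qBinom q m (x + 1) * z ^ (x + 1)) m,
      qBinom_eq_zero_of_lt q (Nat.lt_succ_self m),
      sum_range_succ' (fun r => q ^ r.choose 2 * qBinom q m r * z ^ r) m]
    simp only [Nat.choose_zero_succ, pow_zero, qBinom_zero_right, mul_one, mul_zero, zero_mul,
      add_zero]
    ring

lemma choose_two_add_add_self (s c : ℕ) :
    (s + c).choose 2 + s.choose 2 + s = c.choose 2 + s * (s + c) := by
  induction s with
  | zero => simp
  | succ s ih =>
    rw [show s + 1 + c = s + c + 1 by omega, succ_choose_two, succ_choose_two]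
    nlinarith [ih]

lemma sum_qBinom_mul_qBinom {N c : ℕ} (hc : c ≤ N) :
    ∑ s ∈ range (N - c + 1),
        q ^ ((s + c).choose 2 + s.choose 2 + s) * (qBinom q N (s + c) * qBinom q N s)
      = q ^ c.choose 2 * qBinom q (2 * N) (N + c) := by
  have hsupp : ∀ j ∈ range (N + c + 1), j ∉ Icc c N →
      q ^ ((N - j) * (N + c - j)) * qBinom q N j * qBinom q N (N + c - j) = 0 := by
    intro j hj hjc
    rw [mem_range] at hj
    rw [mem_Icc, not_and_or, not_le, not_le] at hjc
    rcases hjc with h | h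
    · rw [qBinom_eq_zero_of_lt q (show N < N + c - j by omega), mul_zero]
    · rw [qBinom_eq_zero_of_lt q h, mul_zero, zero_mul]
  rw [two_mul, qBinom_add,
    ← sum_subset (fun j hj => by simp only [mem_range, mem_Icc] at hj ⊢; omega) hsupp, mul_sum]
  refine sum_nbij' (fun s => N - s) (fun j => N - j) ?_ ?_ ?_ ?_ ?_
  · intro s hs; simp only [mem_range, mem_Icc] at hs ⊢; omega
  · intro j hj; simp only [mem_range, mem_Icc] at hj ⊢; omega
  · intro s hs; simp only [mem_range] at hs ⊢; omega
  · intro j hj; simp only [mem_Icc] at hj ⊢; omega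
  · intro s hs
    rw [mem_range] at hs
    rw [show N + c - (N - s) = s + c by omega, qBinom_symm q (show s ≤ N by omega),
      show N - (N - s) = s by omega]
    have hq : q ^ c.choose 2 * q ^ (s * (s + c)) = q ^ ((s + c).choose 2 + s.choose 2 + s) := by
      rw [← pow_add, choose_two_add_add_self]
    linear_combination (-(qBinom q N (s + c) * qBinom q N s)) * hq

lemma qBinom_two_mul_add_sub {N c : ℕ} (hc : c ≤ N) :
    qBinom q (2 * N) (N - c) = qBinom q (2 * N) (N + c) := by
  rw [← qBinom_symm q (show N + c ≤ 2 * N by omega), show 2 * N - (N + c) = N - c by omega]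

lemma qBinom_two_mul_toNat {N : ℕ} {k : ℤ} (hk : k.natAbs ≤ N) :
    qBinom q (2 * N) (N + k).toNat = qBinom q (2 * N) (N + k.natAbs) := by
  rcases le_or_gt 0 k with hk0 | hk0
  · rw [show (N + k).toNat = N + k.natAbs by omega]
  · rw [show (N + k).toNat = N - k.natAbs by omega, qBinom_two_mul_add_sub q hk]

end QBinom

lemma sum_range_mul_sum_range_eq_sum_Icc (f g : ℕ → R) (N : ℕ) :
    (∑ i ∈ range (N + 1), f i) * (∑ j ∈ range (N + 1), g j)
      = ∑ k ∈ Icc (-(N : ℤ)) N,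
          ∑ s ∈ range (N - k.natAbs + 1), f (s + k.toNat) * g (s + (-k).toNat) := by
  rw [sum_mul_sum, ← sum_product',
    ← sum_fiberwise_of_maps_to (g := fun p : ℕ × ℕ => (p.1 : ℤ) - p.2) (t := Icc (-(N : ℤ)) N)
      (fun p hp => by simp only [mem_range, mem_Icc, mem_product] at hp ⊢; omega)]
  refine sum_congr rfl fun k hk => ?_
  rw [mem_Icc] at hk
  refine sum_nbij' (fun p => p.1 - k.toNat) (fun s => (s + k.toNat, s + (-k).toNat))
    ?_ ?_ ?_ ?_ ?_
  · intro p hp; simp only [mem_range, mem_product, mem_filter] at hp ⊢; omega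
  · intro s hs; simp only [mem_range, mem_product, mem_filter] at hs ⊢; omega
  · intro p hp; simp only [mem_range, mem_product, mem_filter] at hp; ext <;> simp <;> omega
  · intro s hs; simp
  · intro p hp; simp only [mem_range, mem_product, mem_filter] at hp; congr <;> omega

def jacobiTerm (A B : R) (k : ℤ) : R :=
  (if 0 ≤ k then A else B) ^ k.natAbs * (A * B) ^ k.natAbs.choose 2

lemma sum_range_qBinom_mul_qBinom_mul_pow (A B : R) {N c : ℕ} (hc : c ≤ N) :
    ∑ s ∈ range (N - c + 1), (A * B) ^ (s + c).choose 2 * qBinom (A * B) N (s + c) * A ^ (s + c)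
        * ((A * B) ^ s.choose 2 * qBinom (A * B) N s * B ^ s)
      = A ^ c * ((A * B) ^ c.choose 2 * qBinom (A * B) (2 * N) (N + c)) := by
  rw [← sum_qBinom_mul_qBinom (A * B) hc, mul_sum]
  refine sum_congr rfl fun s _ => ?_
  rw [pow_add, pow_add, pow_add, mul_pow]
  ring

/-- A finite form of the Jacobi triple product. -/
theorem prod_one_add_mul_one_add (A B : R) (N : ℕ) :
    ∏ i ∈ range N, ((1 + A * (A * B) ^ i) * (1 + B * (A * B) ^ i))
      = ∑ k ∈ Icc (-(N : ℤ)) N, jacobiTerm A B k * qBinom (A * B) (2 * N) (N + k).toNat := by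
  rw [prod_mul_distrib, prod_one_add_mul_pow, prod_one_add_mul_pow,
    sum_range_mul_sum_range_eq_sum_Icc]
  refine sum_congr rfl fun k hk => ?_
  rw [mem_Icc] at hk
  rw [qBinom_two_mul_toNat _ (by omega)]
  rcases le_or_gt 0 k with hk0 | hk0
  · rw [show k.toNat = k.natAbs by omega, show (-k).toNat = 0 by omega, jacobiTerm, if_pos hk0]
    simp only [add_zero]
    rw [sum_range_qBinom_mul_qBinom_mul_pow A B (by omega), mul_assoc]
  · have hsymm := sum_range_qBinom_mul_qBinom_mul_pow B A (N := N) (c := k.natAbs) (by omega)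
    rw [mul_comm B A] at hsymm
    rw [show k.toNat = 0 by omega, show (-k).toNat = k.natAbs by omega, jacobiTerm,
      if_neg (by omega), mul_assoc, ← hsymm]
    simp only [add_zero]
    exact sum_congr rfl fun s _ => mul_comm _ _

open Polynomial

def jacobiExp (α β : ℕ) (k : ℤ) : ℕ :=
  (if 0 ≤ k then α else β) * k.natAbs + (α + β) * k.natAbs.choose 2

lemma jacobiTerm_C_mul_X_pow (u v : R) (α β : ℕ) (k : ℤ) :
    jacobiTerm (C u * X ^ α) (C v * X ^ β) k = C (jacobiTerm u v k) * X ^ jacobiExp α β k := by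
  unfold jacobiTerm jacobiExp
  split_ifs <;> simp only [mul_pow, pow_add, pow_mul, C_mul, C_pow] <;> ring

lemma natAbs_le_jacobiExp {α β : ℕ} (hα : 0 < α) (hβ : 0 < β) (k : ℤ) :
    k.natAbs ≤ jacobiExp α β k := by
  unfold jacobiExp
  split_ifs <;> exact le_add_right (Nat.le_mul_of_pos_left _ ‹_›)

lemma two_mul_jacobiExp (α β : ℕ) (k : ℤ) :
    2 * (jacobiExp α β k : ℤ) = (α + β) * k * (k - 1) + 2 * α * k := by
  have key : (2 * jacobiExp α β k : ℚ) = (α + β) * k * (k - 1) + 2 * α * k := by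
    unfold jacobiExp
    split_ifs with hk
    · have hk' : (k.natAbs : ℚ) = k := by
        rw [Nat.cast_natAbs, Int.cast_abs, abs_of_nonneg (by exact_mod_cast hk)]
      push_cast [Nat.cast_choose_two, hk']
      ring
    · have hk' : (k.natAbs : ℚ) = -k := by
        rw [Nat.cast_natAbs, Int.cast_abs, abs_of_neg (by exact_mod_cast not_le.1 hk)]
      push_cast [Nat.cast_choose_two, hk']
      ring
  exact_mod_cast key

local notation "π[" n "]" => Ideal.Quotient.mk (Ideal.span {X ^ (n + 1)})

section Truncation

variable {n : ℕ}

lemma mk_X_pow_eq_zero {e : ℕ} (h : n < e) : π[n] (X ^ e : R[X]) = 0 :=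
  Ideal.Quotient.eq_zero_iff_mem.2 (Ideal.mem_span_singleton.2 (pow_dvd_pow X h))

lemma mk_prod_one_sub_X_pow {ι : Type*} {s : Finset ι} {f : ι → ℕ} (h : ∀ i ∈ s, n < f i) :
    π[n] (∏ i ∈ s, (1 - X ^ f i) : R[X]) = 1 := by
  rw [map_prod]
  exact prod_eq_one fun i hi => by rw [map_sub, map_one, mk_X_pow_eq_zero (h i hi), sub_zero]

lemma coeff_eq_of_mk_eq {p q : R[X]} (h : π[n] p = π[n] q) : p.coeff n = q.coeff n := by
  have hdvd := Ideal.mem_span_singleton.1 (Ideal.Quotient.eq.1 h)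
  rw [X_pow_dvd_iff] at hdvd
  simpa [sub_eq_zero] using hdvd n n.lt_succ_self

lemma mk_prod_one_sub_X_pow_mul_qBinom {c N a : ℕ} (ha : a ≤ N) (hn : n < c * (a + 1)) :
    π[n] ((∏ i ∈ range N, (1 - (X ^ c) ^ (i + 1))) * qBinom (X ^ c : R[X]) (2 * N) a) = 1 := by
  have hsplit : ∏ i ∈ range N, (1 - (X ^ c : R[X]) ^ (i + 1))
      = (∏ i ∈ range a, (1 - (X ^ c) ^ (i + 1))) *
          ∏ i ∈ range (N - a), (1 - (X ^ c) ^ (a + i + 1)) := by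
    rw [← prod_range_add (fun i => 1 - (X ^ c : R[X]) ^ (i + 1)), Nat.add_sub_cancel' ha]
  have hformula := prod_one_sub_pow_mul_qBinom (X ^ c : R[X]) a (2 * N - a)
  rw [show a + (2 * N - a) = 2 * N by omega] at hformula
  rw [hsplit, mul_right_comm, hformula, map_mul]
  simp only [← pow_mul]
  rw [mk_prod_one_sub_X_pow, mk_prod_one_sub_X_pow, one_mul]
  all_goals exact fun i _ => hn.trans_le (Nat.mul_le_mul_left c (by omega))

theorem mk_jacobi_triple_product {u v : R} (huv : u * v = 1) {α β N : ℕ} (hα : 0 < α) (hβ : 0 < β)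
    (hN : 2 * n ≤ N) :
    π[n] ((∏ i ∈ range N, (1 - (X ^ (α + β)) ^ (i + 1))) *
        ∏ i ∈ range N,
          ((1 + C u * X ^ α * (X ^ (α + β)) ^ i) * (1 + C v * X ^ β * (X ^ (α + β)) ^ i)))
      = π[n] (∑ k ∈ Icc (-(N : ℤ)) N, C (jacobiTerm u v k) * X ^ jacobiExp α β k) := by
  have hq : C u * X ^ α * (C v * X ^ β) = (X ^ (α + β) : R[X]) := by
    rw [mul_mul_mul_comm, ← C_mul, huv, C_1, one_mul, pow_add]
  have hjtp := prod_one_add_mul_one_add (C u * X ^ α) (C v * X ^ β) N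
  rw [hq] at hjtp
  rw [hjtp, mul_sum, map_sum, map_sum]
  refine sum_congr rfl fun k hk => ?_
  rw [mem_Icc] at hk
  rw [jacobiTerm_C_mul_X_pow, mul_left_comm, map_mul, map_mul]
  -- Terms with `n < |k|` vanish for degree reasons; in the others the Gaussian binomial cancels
  -- the q-Pochhammer product up to factors `1 - X ^ e` with `n < e`.
  rcases le_or_gt k.natAbs n with hkn | hkn
  · rw [qBinom_two_mul_toNat _ (by omega), ← qBinom_two_mul_add_sub _ (by omega),
      mk_prod_one_sub_X_pow_mul_qBinom (by omega), mul_one]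
    exact (show n < N - k.natAbs + 1 by omega).trans_le (Nat.le_mul_of_pos_left _ (by omega))
  · rw [map_mul, mk_X_pow_eq_zero (hkn.trans_le (natAbs_le_jacobiExp hα hβ k)), mul_zero, zero_mul]

end Truncation

lemma prod_range_mul_eq_prod_prod {M : Type*} [CommMonoid M] (f : ℕ → M) (a b : ℕ) :
    ∏ i ∈ range (a * b), f i = ∏ j ∈ range b, ∏ r ∈ range a, f (a * j + r) := by
  induction b with
  | zero => simp
  | succ b ih => rw [Nat.mul_succ, prod_range_add, ih, prod_range_succ]

lemma mk_pentagonal_X_pow_three {n M : ℕ} (hM : 2 * n ≤ M) :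
    π[n] (∏ i ∈ range (3 * M), (1 - X ^ (3 * (i + 1))) : ℤ[X])
      = π[n] (∑ k ∈ Icc (-(M : ℤ)) M, C ((-1) ^ k.natAbs) * X ^ jacobiExp 3 6 k) := by
  convert mk_jacobi_triple_product (u := (-1 : ℤ)) (v := -1) (by norm_num) (α := 3) (β := 6)
    (by norm_num) (by norm_num) hM using 2
  · rw [prod_range_mul_eq_prod_prod, ← prod_mul_distrib]
    refine prod_congr rfl fun j _ => ?_
    simp only [prod_range_succ, prod_range_zero, C_neg, C_1]
    ring
  · refine sum_congr rfl fun k _ => ?_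
    simp [jacobiTerm]

lemma mk_octagonal_triple_product {n N : ℕ} (hN : 2 * n ≤ N) :
    π[n] ((∏ i ∈ range N, (1 - X ^ (6 * (i + 1)))) *
        ∏ i ∈ range N, ((1 + X ^ (6 * i + 1)) * (1 + X ^ (6 * i + 5))) : ℤ[X])
      = π[n] (∑ k ∈ Icc (-(N : ℤ)) N, X ^ jacobiExp 1 5 k) := by
  convert mk_jacobi_triple_product (u := (1 : ℤ)) (v := 1) (by norm_num) (α := 1) (β := 5)
    (by norm_num) (by norm_num) hN using 2
  · rw [← prod_mul_distrib, ← prod_mul_distrib]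
    refine prod_congr rfl fun i _ => ?_
    simp only [C_1]
    ring
  · refine sum_congr rfl fun k _ => ?_
    simp [jacobiTerm]

lemma coeff_prod_one_add_X_pow (S : Finset ℕ) (m : ℕ) :
    (∏ v ∈ S, (1 + X ^ v : R[X])).coeff m = #{t ∈ S.powerset | t.sum id = m} := by
  classical
  rw [prod_one_add, finsetSum_coeff]
  trans ∑ t ∈ S.powerset, if t.sum id = m then (1 : R) else 0
  · exact sum_congr rfl fun t _ => by
      rw [prod_pow_eq_pow_sum, coeff_X_pow]; exact if_congr eq_comm rfl rfl
  · rw [sum_boole]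

lemma card_powerset_sum_eq_card_partitions (S : Finset ℕ) (hS : 0 ∉ S) (m : ℕ) :
    #{t ∈ S.powerset | t.sum id = m}
      = Fintype.card {P : m.Partition // P.parts.Nodup ∧ ∀ i ∈ P.parts, i ∈ S} := by
  rw [← Fintype.card_coe]
  refine Fintype.card_congr
    { toFun := fun t => ⟨⟨t.1.val, fun hi => ?_, ?_⟩, t.1.nodup, fun i hi => ?_⟩
      invFun := fun P => ⟨⟨P.1.parts, P.2.1⟩, ?_⟩
      left_inv := fun t => rfl
      right_inv := fun P => rfl }
  · exact Nat.pos_of_ne_zero fun h => hS (h ▸ mem_powerset.1 (mem_filter.1 t.2).1 hi)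
  · rw [sum_val]; exact (mem_filter.1 t.2).2
  · exact mem_powerset.1 (mem_filter.1 t.2).1 hi
  · exact mem_filter.2 ⟨mem_powerset.2 P.2.2, by rw [← sum_val]; exact P.1.parts_sum⟩

def q2Parts (N : ℕ) : Finset ℕ := {v ∈ Icc 1 (6 * N) | v % 6 ≠ 2 ∧ v % 6 ≠ 4}

noncomputable def q2Poly (N : ℕ) : ℤ[X] := ∏ v ∈ q2Parts N, (1 + X ^ v)

lemma coeff_q2Poly {N m : ℕ} (hm : m ≤ 6 * N) : (q2Poly N).coeff m = Q2 m := by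
  rw [q2Poly, coeff_prod_one_add_X_pow, card_powerset_sum_eq_card_partitions _ (by simp [q2Parts]),
    Q2]
  congr 1
  refine Fintype.card_congr (Equiv.subtypeEquivRight fun P => and_congr_right fun _ =>
    forall₂_congr fun i hi => ?_)
  have := P.parts_pos hi
  have := P.le_of_mem_parts hi
  simp only [q2Parts, mem_filter, mem_Icc]
  omega

lemma q2Poly_succ (N : ℕ) :
    q2Poly (N + 1) = q2Poly N * ((1 + X ^ (6 * N + 1)) * (1 + X ^ (6 * N + 3)) *
      (1 + X ^ (6 * N + 5)) * (1 + X ^ (6 * N + 6))) := by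
  have hparts : q2Parts (N + 1) = {6 * N + 1, 6 * N + 3, 6 * N + 5, 6 * N + 6} ∪ q2Parts N := by
    ext v
    simp only [q2Parts, mem_union, mem_insert, mem_singleton, mem_filter, mem_Icc]
    omega
  have hdisj : Disjoint {6 * N + 1, 6 * N + 3, 6 * N + 5, 6 * N + 6} (q2Parts N) := by
    simp only [disjoint_left, q2Parts, mem_insert, mem_singleton, mem_filter, mem_Icc]
    omega
  rw [q2Poly, hparts, prod_union hdisj, q2Poly, mul_comm]
  rw [prod_insert (by simp), prod_insert (by simp), prod_insert (by simp), prod_singleton]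
  ring

lemma q2Poly_mul_prod_one_sub_X_pow (N : ℕ) :
    q2Poly N * ∏ i ∈ range (2 * N), (1 - X ^ (3 * (i + 1)))
      = (∏ i ∈ range (2 * N), (1 - X ^ (6 * (i + 1)))) *
          ∏ i ∈ range N, ((1 + X ^ (6 * i + 1)) * (1 + X ^ (6 * i + 5))) := by
  induction N with
  | zero => simp [q2Poly, q2Parts]
  | succ N ih =>
    rw [q2Poly_succ, show 2 * (N + 1) = 2 * N + 1 + 1 by ring, prod_range_succ, prod_range_succ,
      prod_range_succ, prod_range_succ, prod_range_succ]
    linear_combination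
      ((1 + X ^ (6 * N + 1)) * (1 + X ^ (6 * N + 5)) * (1 - X ^ (6 * (2 * N + 1)))
        * (1 - X ^ (6 * (2 * N + 1 + 1)))) * ih

lemma mk_q2Poly_mul_pentagonal {n L : ℕ} (hL : n ≤ L) :
    π[n] (q2Poly (3 * L) *
        ∑ k ∈ Icc (-((2 * L : ℕ) : ℤ)) (2 * L : ℕ), C ((-1) ^ k.natAbs) * X ^ jacobiExp 3 6 k)
      = π[n] (∑ k ∈ Icc (-((3 * L : ℕ) : ℤ)) (3 * L : ℕ), X ^ jacobiExp 1 5 k) := by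
  have htail : π[n] (∏ i ∈ range (3 * L), (1 - X ^ (6 * (3 * L + i + 1))) : ℤ[X]) = 1 :=
    mk_prod_one_sub_X_pow fun i _ => by omega
  rw [map_mul, ← mk_pentagonal_X_pow_three (by omega), ← map_mul,
    show 3 * (2 * L) = 2 * (3 * L) by ring, q2Poly_mul_prod_one_sub_X_pow,
    ← mk_octagonal_triple_product (by omega), two_mul, prod_range_add, map_mul, map_mul, map_mul,
    htail, mul_one]

lemma coeff_q2Poly_mul_sum {n N : ℕ} (hn : n ≤ 6 * N) (s : Finset ℤ) (c : ℤ → ℤ) (e : ℤ → ℕ) :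
    (q2Poly N * ∑ k ∈ s, C (c k) * X ^ e k).coeff n = ∑ k ∈ s, c k * Q2z (n - e k) := by
  rw [mul_sum, finsetSum_coeff]
  refine sum_congr rfl fun k _ => ?_
  rw [mul_left_comm, coeff_C_mul, coeff_mul_X_pow', Q2z]
  by_cases hk : e k ≤ n
  · rw [if_pos hk, if_pos (by omega), coeff_q2Poly (by omega),
      show ((n : ℤ) - e k).toNat = n - e k by omega]
  · rw [if_neg hk, if_neg (by omega)]

lemma jacobiExp_three_six (k : ℤ) : (jacobiExp 3 6 k : ℤ) = 3 * k * (3 * k - 1) / 2 := by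
  have h := two_mul_jacobiExp 3 6 k
  push_cast at h
  rw [show 3 * k * (3 * k - 1) = 2 * (jacobiExp 3 6 k : ℤ) by linarith,
    Int.mul_ediv_cancel_left _ two_ne_zero]

lemma jacobiExp_one_five (k : ℤ) : (jacobiExp 1 5 k : ℤ) = k * (3 * k - 2) := by
  have h := two_mul_jacobiExp 1 5 k
  push_cast at h
  linarith

open scoped Classical in
lemma coeff_sum_X_pow_jacobiExp_one_five {n N : ℕ} (hn : n ≤ N) :
    (∑ k ∈ Icc (-(N : ℤ)) N, X ^ jacobiExp 1 5 k : ℤ[X]).coeff n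
      = if ∃ k : ℤ, (n : ℤ) = k * (3 * k - 2) then 1 else 0 := by
  simp only [finsetSum_coeff, coeff_X_pow]
  split_ifs with h
  · obtain ⟨k₀, hk₀⟩ := h
    have hk₀' : n = jacobiExp 1 5 k₀ := by have := jacobiExp_one_five k₀; omega
    have hmem : k₀ ∈ Icc (-(N : ℤ)) N := by
      have := natAbs_le_jacobiExp (α := 1) (β := 5) one_pos (by norm_num) k₀
      rw [mem_Icc]
      omega
    refine (sum_eq_single_of_mem k₀ hmem fun k _ hk => if_neg fun hkn => hk ?_).trans (if_pos hk₀')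
    have hsq : k * (3 * k - 2) = k₀ * (3 * k₀ - 2) := by
      rw [← jacobiExp_one_five, ← jacobiExp_one_five, ← hkn, hk₀']
    have hfac : (k - k₀) * (3 * (k + k₀) - 2) = 0 := by linear_combination hsq
    rcases mul_eq_zero.1 hfac with h | h <;> omega
  · exact sum_eq_zero fun k _ =>
      if_neg fun hk => h ⟨k, by rw [← jacobiExp_one_five]; exact_mod_cast hk⟩

open scoped Classical in
theorem stmt14 (n : ℕ) :
    ∑ j ∈ Finset.Icc (-(n : ℤ) - 1) ((n : ℤ) + 1),
        (-1) ^ j.natAbs * Q2z ((n : ℤ) - 3 * j * (3 * j - 1) / 2) =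
      if ∃ k : ℤ, (n : ℤ) = k * (3 * k - 2) then 1 else 0 := by
  have h := coeff_eq_of_mk_eq (mk_q2Poly_mul_pentagonal (n := n) (L := n + 1) (by omega))
  rw [coeff_q2Poly_mul_sum (by omega), coeff_sum_X_pow_jacobiExp_one_five (by omega)] at h
  have hvanish : ∀ k ∈ Icc (-((2 * (n + 1) : ℕ) : ℤ)) (2 * (n + 1) : ℕ),
      k ∉ Icc (-(n : ℤ) - 1) (n + 1) → (-1) ^ k.natAbs * Q2z (n - jacobiExp 3 6 k) = 0 := by
    intro k _ hk
    have := natAbs_le_jacobiExp (α := 3) (β := 6) (by norm_num) (by norm_num) k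
    rw [mem_Icc] at hk
    rw [Q2z, if_neg (by omega), mul_zero]
  rw [← h, ← sum_subset (fun j hj => by rw [mem_Icc] at hj ⊢; omega) hvanish]
  exact sum_congr rfl fun k _ => by rw [jacobiExp_three_six]
end

section
/- For every nonnegative integer n, Q_2(n) = b_{6,ee}(n) - b_{6,eo}(n), where b_{6,ee}(n) (resp. b_{6,eo}(n)) is the number of 6-regular partitions of n with an even (resp. odd) number of even parts. -/
open Finset

/-- 6-regular partitions of `n` with an even number of even parts. -/
def b6ee (n : ℕ) : ℕ :=
  Fintype.card {P : Nat.Partition n // (∀ i ∈ P.parts, ¬ (6 ∣ i)) ∧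
    Even (Multiset.card (P.parts.filter (fun i => Even i)))}

/-- 6-regular partitions of `n` with an odd number of even parts. -/
def b6eo (n : ℕ) : ℕ :=
  Fintype.card {P : Nat.Partition n // (∀ i ∈ P.parts, ¬ (6 ∣ i)) ∧
    Odd (Multiset.card (P.parts.filter (fun i => Even i)))}

/-!
Give a part `k` of a 6-regular partition the sign `s k = -1` if `k` is even and `1` if it is
odd. Then `b_{6,ee}(n) - b_{6,eo}(n)` is the `n`-th coefficient of `∏_{6 ∤ k} (1 - s k q^k)⁻¹`,
while `Q_2(n)` is that of `∏_{k ≢ ±2 (6)} (1 + q^k)`. Both series are inverse to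
`D = ∏_{6 ∤ k} (1 - s k q^k) = ∏_{k ≡ ±2 (6)} (1 + q^k) · ∏_{k odd} (1 - q^k)`: for the second
this is Euler's identity `∏_k (1 + q^k) · ∏_{k odd} (1 - q^k) = 1`.
-/

open PowerSeries PowerSeries.WithPiTopology

theorem Multiset.prod_map_ite_one_zero {α R : Type*} [CommMonoidWithZero R] (P : α → Prop)
    [DecidablePred P] (s : Multiset α) :
    (s.map fun a ↦ if P a then (1 : R) else 0).prod = if ∀ a ∈ s, P a then 1 else 0 := by
  induction s using Multiset.induction_on with
  | empty => simp
  | cons a s ih => by_cases ha : P a <;> simp [ha, ih]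

theorem Multiset.toFinsupp_prod_ite_eq_one {R : Type*} [CommMonoidWithZero R] (s : Multiset ℕ)
    (τ : ℕ → R) :
    s.toFinsupp.prod (fun k c ↦ if c = 1 then τ k else 0) =
      if s.Nodup then (s.map τ).prod else 0 := by
  rw [Finsupp.prod, Finset.prod_ite_zero]
  simp only [Multiset.toFinsupp_support, Multiset.toFinsupp_apply, Multiset.mem_toFinset,
    ← Multiset.nodup_iff_count_eq_one]
  split_ifs with h
  · rw [Finset.prod_eq_multiset_prod, Multiset.toFinset_val, Multiset.dedup_eq_self.mpr h]
  · rfl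

namespace Nat.Partition

theorem hasProd_one_add_C_mul_X_pow {R : Type*} [CommSemiring R] [TopologicalSpace R]
    [T2Space R] (τ : ℕ → R) :
    HasProd (fun i ↦ 1 + C (τ (i + 1)) * X ^ (i + 1))
      (PowerSeries.mk fun n ↦ ∑ p ∈ distincts n, (p.parts.map τ).prod) := by
  convert hasProd_genFun (fun k c ↦ if c = 1 then τ k else 0) using 1
  · funext i
    rw [tsum_eq_single 0 (fun j hj ↦ by simp [hj]), smul_eq_C_mul]
    simp
  · ext n
    simp [distincts, sum_filter, Multiset.toFinsupp_prod_ite_eq_one]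

variable {R : Type*} [CommRing R] [TopologicalSpace R] [T2Space R]

theorem multipliable_one_sub_C_mul_X_pow (σ : ℕ → R) :
    Multipliable fun i ↦ 1 - C (σ (i + 1)) * (X : R⟦X⟧) ^ (i + 1) := by
  simpa [sub_eq_add_neg] using (hasProd_one_add_C_mul_X_pow (-σ)).multipliable

variable [IsTopologicalRing R]

theorem hasProd_tsum_C_mul_X_pow_pow (σ : ℕ → R) :
    HasProd (fun i ↦ ∑' j, (C (σ (i + 1)) * X ^ (i + 1)) ^ j)
      (PowerSeries.mk fun n ↦ ∑ p : n.Partition, (p.parts.map σ).prod) := by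
  have hfactor (i : ℕ) : ∑' j, (C (σ (i + 1)) * X ^ (i + 1) : R⟦X⟧) ^ j =
      1 + ∑' j, σ (i + 1) ^ (j + 1) • X ^ ((i + 1) * (j + 1)) := by
    have hsum := summable_pow_of_constantCoeff_eq_zero (f := C (σ (i + 1)) * X ^ (i + 1))
      (by simp)
    rw [hsum.tsum_eq_zero_add]
    simp_rw [pow_zero, mul_pow, ← map_pow, ← pow_mul, smul_eq_C_mul]
  have hcoeff : (PowerSeries.mk fun n ↦ ∑ p : n.Partition, (p.parts.map σ).prod) =
      genFun fun k c ↦ σ k ^ c := by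
    ext n
    simp [Finsupp.prod, Finset.prod_multiset_map_count]
  rw [funext hfactor, hcoeff]
  exact hasProd_genFun fun k c ↦ σ k ^ c

theorem mk_sum_prod_map_mul_tprod_one_sub_eq_one (σ : ℕ → R) :
    (PowerSeries.mk fun n ↦ ∑ p : n.Partition, (p.parts.map σ).prod) *
      ∏' i, (1 - C (σ (i + 1)) * X ^ (i + 1)) = 1 := by
  refine ((hasProd_tsum_C_mul_X_pow_pow σ).mul
    (multipliable_one_sub_C_mul_X_pow σ).hasProd).unique ?_
  convert hasProd_one with i
  exact tsum_pow_mul_one_sub_of_constantCoeff_eq_zero (by simp)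

theorem tprod_one_add_X_pow_mul_tprod_one_sub_X_pow_odd :
    (∏' i, (1 + X ^ (i + 1) : R⟦X⟧)) *
      ∏' i, (1 - C (if ¬Even (i + 1) then 1 else 0) * X ^ (i + 1)) = 1 := by
  have hodds := mk_sum_prod_map_mul_tprod_one_sub_eq_one fun k ↦ if ¬Even k then (1 : R) else 0
  have hdistincts := (hasProd_one_add_C_mul_X_pow fun _ ↦ (1 : R)).tprod_eq
  simp only [map_one, one_mul, Multiset.map_const', Multiset.prod_replicate, one_pow,
    sum_const, nsmul_one] at hdistincts
  simp only [Multiset.prod_map_ite_one_zero, sum_boole] at hodds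
  rw [hdistincts]
  convert hodds using 4 with n
  rw [← card_odds_eq_card_distincts]
  rfl

end Nat.Partition

section SixRegular

open Nat.Partition

def sixRegularSign (k : ℕ) : ℤ := if 6 ∣ k then 0 else if Even k then -1 else 1

theorem prod_map_sixRegularSign (s : Multiset ℕ) :
    (s.map sixRegularSign).prod =
      if ∀ k ∈ s, ¬ 6 ∣ k then (-1) ^ Multiset.card (s.filter Even) else 0 := by
  induction s using Multiset.induction_on with
  | empty => simp
  | cons a s ih =>
    rw [Multiset.map_cons, Multiset.prod_cons, ih]
    by_cases h6 : 6 ∣ a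
    · simp [sixRegularSign, h6]
    by_cases he : Even a <;> simp [sixRegularSign, h6, he, pow_succ]

theorem b6ee_sub_b6eo_eq_sum (n : ℕ) :
    (b6ee n : ℤ) - b6eo n = ∑ p : n.Partition, (p.parts.map sixRegularSign).prod := by
  rw [b6ee, b6eo, Fintype.card_subtype, Fintype.card_subtype, natCast_card_filter,
    natCast_card_filter, ← sum_sub_distrib]
  refine sum_congr rfl fun p _ ↦ ?_
  rw [prod_map_sixRegularSign]
  by_cases hreg : ∀ k ∈ p.parts, ¬ 6 ∣ k
  · rcases Nat.even_or_odd (Multiset.card (p.parts.filter Even)) with he | ho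
    · simp [if_pos hreg, he, he.neg_one_pow, Nat.not_odd_iff_even.mpr he]
    · simp [if_pos hreg, ho, ho.neg_one_pow, Nat.not_even_iff_odd.mpr ho]
  · simp [hreg]

theorem Q2_eq_sum (n : ℕ) :
    (Q2 n : ℤ) = ∑ p ∈ distincts n,
      (p.parts.map fun k ↦ if k % 6 ≠ 2 ∧ k % 6 ≠ 4 then 1 else 0).prod := by
  rw [Q2, Fintype.card_subtype, distincts, sum_filter, natCast_card_filter]
  simp_rw [Multiset.prod_map_ite_one_zero, ite_and]

theorem one_sub_C_sixRegularSign_mul_X_pow_eq_mul (k : ℕ) :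
    (1 - C (sixRegularSign k) * X ^ k : ℤ⟦X⟧) =
      (1 + C (if k % 6 = 2 ∨ k % 6 = 4 then 1 else 0) * X ^ k) *
        (1 - C (if ¬Even k then 1 else 0) * X ^ k) := by
  have h6 : 6 ∣ k ↔ k % 6 = 0 := Nat.dvd_iff_mod_eq_zero
  have he : Even k ↔ k % 6 % 2 = 0 := by rw [Nat.even_iff]; omega
  simp only [sixRegularSign, h6, he]
  have hr := Nat.mod_lt k (show 6 > 0 by norm_num)
  generalize k % 6 = r at hr ⊢
  interval_cases r <;> simp

theorem mul_one_add_C_mul_X_pow_eq_one_add_X_pow_mod_six (k : ℕ) :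
    (1 + C (if k % 6 ≠ 2 ∧ k % 6 ≠ 4 then 1 else 0) * X ^ k) *
      (1 + C (if k % 6 = 2 ∨ k % 6 = 4 then 1 else 0) * X ^ k) = (1 + X ^ k : ℤ⟦X⟧) := by
  by_cases h : k % 6 = 2 ∨ k % 6 = 4
  · simp [h, show ¬(k % 6 ≠ 2 ∧ k % 6 ≠ 4) by omega]
  · simp [not_or.mp h]

theorem mk_sum_distincts_mul_tprod_one_sub_sixRegularSign :
    (PowerSeries.mk fun n ↦ ∑ p ∈ distincts n,
      (p.parts.map fun k ↦ if k % 6 ≠ 2 ∧ k % 6 ≠ 4 then 1 else 0).prod) *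
      ∏' i, (1 - C (sixRegularSign (i + 1)) * X ^ (i + 1)) = 1 := by
  set τ : ℕ → ℤ := fun k ↦ if k % 6 ≠ 2 ∧ k % 6 ≠ 4 then 1 else 0
  set ε : ℕ → ℤ := fun k ↦ if k % 6 = 2 ∨ k % 6 = 4 then 1 else 0
  set ω : ℕ → ℤ := fun k ↦ if ¬Even k then 1 else 0
  have hτ := hasProd_one_add_C_mul_X_pow τ
  have hε := (hasProd_one_add_C_mul_X_pow ε).multipliable
  have hω := multipliable_one_sub_C_mul_X_pow ω
  calc _ = (∏' i, (1 + C (τ (i + 1)) * X ^ (i + 1))) *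
        ∏' i, ((1 + C (ε (i + 1)) * X ^ (i + 1)) * (1 - C (ω (i + 1)) * X ^ (i + 1))) := by
        simp_rw [hτ.tprod_eq, one_sub_C_sixRegularSign_mul_X_pow_eq_mul]
        rfl
    _ = (∏' i, (1 + C (τ (i + 1)) * X ^ (i + 1)) * (1 + C (ε (i + 1)) * X ^ (i + 1))) *
        ∏' i, (1 - C (ω (i + 1)) * X ^ (i + 1)) := by
        rw [hε.tprod_mul hω, ← mul_assoc, hτ.multipliable.tprod_mul hε]
    _ = (∏' i, (1 + X ^ (i + 1))) * ∏' i, (1 - C (ω (i + 1)) * X ^ (i + 1)) := by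
        simp_rw [τ, ε, mul_one_add_C_mul_X_pow_eq_one_add_X_pow_mod_six]
    _ = 1 := tprod_one_add_X_pow_mul_tprod_one_sub_X_pow_odd

end SixRegular

theorem stmt18 (n : ℕ) :
    (Q2 n : ℤ) = (b6ee n : ℤ) - (b6eo n : ℤ) := by
  have hgf := left_inv_eq_right_inv mk_sum_distincts_mul_tprod_one_sub_sixRegularSign
    ((mul_comm _ _).trans (Nat.Partition.mk_sum_prod_map_mul_tprod_one_sub_eq_one sixRegularSign))
  rw [Q2_eq_sum, b6ee_sub_b6eo_eq_sum]
  simpa using congrArg (coeff n) hgf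
end

section
/- For every nonnegative integer n, p(n) - p(n-6) - p(n-12) + p(n-30) ≤ b_6(n) ≤ p(n) - p(n-6), where p(x) = 0 for x negative. -/
/-!
Split the partitions of `n` into the 6-regular ones, those having a part `6`, and those having a
part divisible by `6` but no part `6`. Removing a part `6` shows that the second class is counted
by `p(n - 6)`, which gives the upper bound. The lower bound then amounts to an injection of the
third class into the partitions of `n - 12` with at most two parts `6`, since those with at least
three parts `6` are counted by `p(n - 30)`.

The injection replaces the smallest multiple `M ≥ 12` of `6` in `λ` by `c` parts `6` and markers
(parts `12` and `18` below `12 + 6c ≤ M`) adding up to `M - 12 - 6c`, where `c = 0` for `M = 12`,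
`c = 1` for `M ∈ {18, 30}` and `c = 2` otherwise. No other part of `λ` is `6` or a marker, so `λ`
is recovered from its image by counting the parts `6` and collecting the markers.
-/

open Finset

/-- Euler's partition function. -/
def pnat (n : ℕ) : ℕ := Fintype.card (Nat.Partition n)

/-- `p` extended to integers, `0` on negatives. -/
def pz (x : ℤ) : ℤ := if 0 ≤ x then pnat x.toNat else 0

def partitionMultisets (n : ℕ) : Finset (Multiset ℕ) :=
  (univ : Finset (Nat.Partition n)).map ⟨Nat.Partition.parts, fun _ _ => Nat.Partition.ext⟩

lemma mem_partitionMultisets {n : ℕ} {s : Multiset ℕ} :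
    s ∈ partitionMultisets n ↔ (∀ i ∈ s, 0 < i) ∧ s.sum = n := by
  simp only [partitionMultisets, mem_map, mem_univ, true_and]
  constructor
  · rintro ⟨p, rfl⟩
    exact ⟨fun i hi => p.parts_pos hi, p.parts_sum⟩
  · rintro ⟨hpos, hsum⟩
    exact ⟨⟨s, hpos _, hsum⟩, rfl⟩

lemma card_partitionMultisets (n : ℕ) : #(partitionMultisets n) = pnat n := by
  rw [partitionMultisets, card_map, card_univ, pnat]

lemma b6_eq_card_filter (n : ℕ) :
    b6 n = #((partitionMultisets n).filter fun s => ∀ i ∈ s, ¬ 6 ∣ i) := by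
  rw [b6, Fintype.card_subtype, partitionMultisets, filter_map, card_map]
  rfl

lemma pz_natCast (n : ℕ) : pz n = pnat n := by
  simp [pz]

lemma pz_of_neg {x : ℤ} (hx : x < 0) : pz x = 0 := by
  rw [pz, if_neg (by omega)]

lemma filter_le_count_partitionMultisets_add {a : ℕ} (ha : 0 < a) (k n : ℕ) :
    (partitionMultisets (n + k * a)).filter (fun s => k ≤ s.count a) =
      (partitionMultisets n).map ⟨(Multiset.replicate k a + ·), add_right_injective _⟩ := by
  ext s
  simp only [mem_filter, mem_map, mem_partitionMultisets, Function.Embedding.coeFn_mk]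
  constructor
  · rintro ⟨⟨hpos, hsum⟩, hk⟩
    have hle : Multiset.replicate k a ≤ s := Multiset.le_count_iff_replicate_le.mp hk
    have hs := add_tsub_cancel_of_le hle
    refine ⟨s - Multiset.replicate k a,
      ⟨fun i hi => hpos i (Multiset.mem_of_le tsub_le_self hi), ?_⟩, hs⟩
    rw [← hs, Multiset.sum_add, Multiset.sum_replicate, smul_eq_mul] at hsum
    omega
  · rintro ⟨t, ⟨hpos, hsum⟩, rfl⟩
    refine ⟨⟨fun i hi => ?_, ?_⟩, ?_⟩
    · rcases Multiset.mem_add.mp hi with hi | hi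
      · rwa [Multiset.eq_of_mem_replicate hi]
      · exact hpos i hi
    · rw [Multiset.sum_add, Multiset.sum_replicate, smul_eq_mul, hsum]
      ring
    · rw [Multiset.count_add, Multiset.count_replicate_self]
      omega

lemma filter_le_count_partitionMultisets_eq_empty {a k n : ℕ} (h : n < k * a) :
    (partitionMultisets n).filter (fun s => k ≤ s.count a) = ∅ := by
  refine filter_eq_empty_iff.mpr fun s hs hk => ?_
  obtain ⟨-, hsum⟩ := mem_partitionMultisets.mp hs
  have hle : Multiset.replicate k a ≤ s := Multiset.le_count_iff_replicate_le.mp hk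
  rw [← add_tsub_cancel_of_le hle, Multiset.sum_add, Multiset.sum_replicate, smul_eq_mul] at hsum
  omega

lemma card_filter_le_count {a : ℕ} (ha : 0 < a) (k n : ℕ) :
    (#((partitionMultisets n).filter fun s => k ≤ s.count a) : ℤ) = pz (n - k * a) := by
  rcases le_or_gt (k * a) n with h | h
  · obtain ⟨m, rfl⟩ := Nat.exists_eq_add_of_le' h
    rw [filter_le_count_partitionMultisets_add ha, card_map, card_partitionMultisets]
    push_cast
    rw [add_sub_cancel_right, pz_natCast]
  · have : (n : ℤ) < k * a := by exact_mod_cast h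
    rw [filter_le_count_partitionMultisets_eq_empty h, card_empty, pz_of_neg (by linarith)]
    rfl

def IsSixMarker (c i : ℕ) : Prop := 6 < i ∧ 6 ∣ i ∧ i < 12 + 6 * c

instance (c : ℕ) : DecidablePred (IsSixMarker c) :=
  fun _ => inferInstanceAs (Decidable (_ ∧ _ ∧ _))

def decodeSix (μ : Multiset ℕ) : Multiset ℕ :=
  (12 + 6 * μ.count 6 + (μ.filter (IsSixMarker (μ.count 6))).sum) ::ₘ
    μ.filter fun i => i ≠ 6 ∧ ¬ IsSixMarker (μ.count 6) i

section Markers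

variable {c : ℕ} {code r : Multiset ℕ}

lemma count_six_replicate_add (hcode : ∀ i ∈ code, IsSixMarker c i) (hr : ∀ i ∈ r, i ≠ 6) :
    (Multiset.replicate c 6 + code + r).count 6 = c := by
  rw [Multiset.count_add, Multiset.count_add, Multiset.count_replicate_self,
    Multiset.count_eq_zero.mpr fun h => (hcode 6 h).1.false,
    Multiset.count_eq_zero.mpr fun h => hr 6 h rfl, add_zero, add_zero]

lemma decodeSix_replicate_add (hcode : ∀ i ∈ code, IsSixMarker c i)
    (hr : ∀ i ∈ r, i ≠ 6 ∧ ¬ IsSixMarker c i) :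
    decodeSix (Multiset.replicate c 6 + code + r) = (12 + 6 * c + code.sum) ::ₘ r := by
  rw [decodeSix, count_six_replicate_add hcode fun i hi => (hr i hi).1]
  congr 3
  · rw [Multiset.filter_add, Multiset.filter_add,
      Multiset.filter_eq_nil.mpr fun i hi h => h.1.ne' (Multiset.eq_of_mem_replicate hi),
      Multiset.filter_eq_self.mpr hcode, Multiset.filter_eq_nil.mpr fun i hi => (hr i hi).2,
      zero_add, add_zero]
  · rw [Multiset.filter_add, Multiset.filter_add,
      Multiset.filter_eq_nil.mpr fun i hi h => h.1 (Multiset.eq_of_mem_replicate hi),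
      Multiset.filter_eq_nil.mpr fun i hi h => h.2 (hcode i hi), Multiset.filter_eq_self.mpr hr,
      zero_add, zero_add]

end Markers

def markerCode (x : ℕ) : Multiset ℕ :=
  if 12 ∣ x then Multiset.replicate (x / 12) 12 else 18 ::ₘ Multiset.replicate ((x - 18) / 12) 12

lemma sum_markerCode {x : ℕ} (h6 : 6 ∣ x) (hx : x ≠ 6) : (markerCode x).sum = x := by
  unfold markerCode
  split_ifs with h12
  · rw [Multiset.sum_replicate, smul_eq_mul]
    omega
  · rw [Multiset.sum_cons, Multiset.sum_replicate, smul_eq_mul]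
    omega

lemma mem_markerCode {x i : ℕ} (hi : i ∈ markerCode x) : i = 12 ∨ i = 18 ∧ ¬ 12 ∣ x := by
  unfold markerCode at hi
  split_ifs at hi with h12
  · exact .inl (Multiset.eq_of_mem_replicate hi)
  · rcases Multiset.mem_cons.mp hi with h | h
    · exact .inr ⟨h, h12⟩
    · exact .inl (Multiset.eq_of_mem_replicate h)

-- `M = 30` gets a single part `6`: with two, the remaining `6` would not be a sum of markers.
def sixCount (M : ℕ) : ℕ := if M = 12 then 0 else if M = 18 ∨ M = 30 then 1 else 2

def sixReplacement (M : ℕ) : Multiset ℕ :=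
  Multiset.replicate (sixCount M) 6 + markerCode (M - 12 - 6 * sixCount M)

section Replacement

variable {M : ℕ}

lemma sixCount_le_two (M : ℕ) : sixCount M ≤ 2 := by
  unfold sixCount
  split_ifs <;> omega

lemma add_sum_markerCode (h6 : 6 ∣ M) (h12 : 12 ≤ M) :
    12 + 6 * sixCount M + (markerCode (M - 12 - 6 * sixCount M)).sum = M := by
  rw [sum_markerCode] <;> unfold sixCount <;> split_ifs <;> omega

lemma isSixMarker_of_mem_markerCode {i : ℕ}
    (hi : i ∈ markerCode (M - 12 - 6 * sixCount M)) : IsSixMarker (sixCount M) i := by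
  rcases eq_or_ne M 12 with rfl | hM
  · simp [sixCount, markerCode] at hi
  unfold IsSixMarker
  rcases mem_markerCode hi with rfl | ⟨rfl, h12⟩ <;> unfold sixCount at * <;> split_ifs at * <;> omega

end Replacement

noncomputable def minSixMultiple (s : Multiset ℕ) : ℕ := sInf {i | i ∈ s ∧ 6 ∣ i}

noncomputable def encodeSix (s : Multiset ℕ) : Multiset ℕ :=
  sixReplacement (minSixMultiple s) + s.erase (minSixMultiple s)

def HasSixMultipleNotSix (s : Multiset ℕ) : Prop := 6 ∉ s ∧ ∃ i ∈ s, 6 ∣ i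

instance : DecidablePred HasSixMultipleNotSix :=
  fun _ => @instDecidableAnd _ _ _ Multiset.decidableExistsMultiset

section Encode

variable {s : Multiset ℕ}

lemma minSixMultiple_mem (hs : ∃ i ∈ s, 6 ∣ i) :
    minSixMultiple s ∈ s ∧ 6 ∣ minSixMultiple s :=
  Nat.sInf_mem hs

lemma minSixMultiple_le {i : ℕ} (hi : i ∈ s) (h6 : 6 ∣ i) : minSixMultiple s ≤ i :=
  Nat.sInf_le ⟨hi, h6⟩

lemma twelve_le_minSixMultiple (hpos : ∀ i ∈ s, 0 < i) (hs : HasSixMultipleNotSix s) :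
    12 ≤ minSixMultiple s := by
  obtain ⟨hM, k, hk⟩ := minSixMultiple_mem hs.2
  have := hpos _ hM
  have : minSixMultiple s ≠ 6 := fun h => hs.1 (h ▸ hM)
  omega

lemma not_isSixMarker_of_mem_erase (hpos : ∀ i ∈ s, 0 < i) (hs : HasSixMultipleNotSix s)
    {i : ℕ} (hi : i ∈ s.erase (minSixMultiple s)) :
    i ≠ 6 ∧ ¬ IsSixMarker (sixCount (minSixMultiple s)) i := by
  have hi' := Multiset.mem_of_mem_erase hi
  obtain ⟨-, hM6⟩ := minSixMultiple_mem hs.2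
  have hsum := add_sum_markerCode hM6 (twelve_le_minSixMultiple hpos hs)
  refine ⟨fun h => hs.1 (h ▸ hi'), fun ⟨_, h6, hlt⟩ => ?_⟩
  have := minSixMultiple_le hi' h6
  omega

lemma decodeSix_encodeSix (hpos : ∀ i ∈ s, 0 < i) (hs : HasSixMultipleNotSix s) :
    decodeSix (encodeSix s) = s := by
  obtain ⟨hM, hM6⟩ := minSixMultiple_mem hs.2
  rw [encodeSix, sixReplacement,
    decodeSix_replicate_add (fun _ => isSixMarker_of_mem_markerCode)
      (fun _ => not_isSixMarker_of_mem_erase hpos hs),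
    add_sum_markerCode hM6 (twelve_le_minSixMultiple hpos hs), Multiset.cons_erase hM]

lemma encodeSix_mem (n : ℕ) (hs : s ∈ (partitionMultisets n).filter HasSixMultipleNotSix) :
    encodeSix s ∈ (partitionMultisets (n - 12)).filter fun t => ¬ 3 ≤ t.count 6 := by
  obtain ⟨hmem, hs⟩ := mem_filter.mp hs
  obtain ⟨hpos, hsum⟩ := mem_partitionMultisets.mp hmem
  obtain ⟨hM, hM6⟩ := minSixMultiple_mem hs.2
  have hrest {i : ℕ} := not_isSixMarker_of_mem_erase (i := i) hpos hs
  rw [mem_filter, mem_partitionMultisets, encodeSix, sixReplacement,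
    count_six_replicate_add (fun _ => isSixMarker_of_mem_markerCode) fun _ hi => (hrest hi).1]
  refine ⟨⟨fun i hi => ?_, ?_⟩, (sixCount_le_two _).not_gt⟩
  · rcases Multiset.mem_add.mp hi with hi | hi
    · rcases Multiset.mem_add.mp hi with hi | hi
      · rw [Multiset.eq_of_mem_replicate hi]; norm_num
      · exact (isSixMarker_of_mem_markerCode hi).1.trans' (by norm_num)
    · exact hpos i (Multiset.mem_of_mem_erase hi)
  · have h1 := add_sum_markerCode hM6 (twelve_le_minSixMultiple hpos hs)
    have h2 := Multiset.sum_erase hM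
    rw [Multiset.sum_add, Multiset.sum_add, Multiset.sum_replicate, smul_eq_mul]
    omega

end Encode

lemma card_filter_hasSixMultipleNotSix_le (n : ℕ) :
    #((partitionMultisets n).filter HasSixMultipleNotSix) ≤
      #((partitionMultisets (n - 12)).filter fun t => ¬ 3 ≤ t.count 6) := by
  refine card_le_card_of_injOn encodeSix (fun s hs => encodeSix_mem n hs)
    (Set.LeftInvOn.injOn (f₁' := decodeSix) fun s hs => ?_)
  obtain ⟨hmem, hs⟩ := mem_filter.mp hs
  exact decodeSix_encodeSix (mem_partitionMultisets.mp hmem).1 hs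

lemma filter_hasSixMultipleNotSix_eq_empty {n : ℕ} (hn : n < 12) :
    (partitionMultisets n).filter HasSixMultipleNotSix = ∅ := by
  refine filter_eq_empty_iff.mpr fun s hs hsix => ?_
  obtain ⟨hpos, hsum⟩ := mem_partitionMultisets.mp hs
  have := Multiset.le_sum_of_mem (minSixMultiple_mem hsix.2).1
  have := twelve_le_minSixMultiple hpos hsix
  omega

lemma card_filter_hasSixMultipleNotSix_add_le (n : ℕ) :
    (#((partitionMultisets n).filter HasSixMultipleNotSix) : ℤ) + pz (n - 30) ≤ pz (n - 12) := by
  rcases le_or_gt 12 n with h | h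
  · obtain ⟨m, rfl⟩ := Nat.exists_eq_add_of_le' h
    have hinj := card_filter_hasSixMultipleNotSix_le (m + 12)
    have hsplit := card_filter_add_card_filter_not (s := partitionMultisets m)
      fun t => 3 ≤ t.count 6
    have hthree := card_filter_le_count (a := 6) (by norm_num) 3 m
    rw [Nat.add_sub_cancel] at hinj
    rw [card_partitionMultisets] at hsplit
    push_cast at hthree ⊢
    rw [show (m : ℤ) + 12 - 30 = m - 18 by ring, add_sub_cancel_right, pz_natCast, ← hthree]
    omega
  · rw [filter_hasSixMultipleNotSix_eq_empty h, pz_of_neg (by omega), pz_of_neg (by omega)]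
    rfl

lemma pnat_eq_b6_add (n : ℕ) :
    pnat n = b6 n + #((partitionMultisets n).filter (6 ∈ ·)) +
      #((partitionMultisets n).filter HasSixMultipleNotSix) := by
  have hreg := card_filter_add_card_filter_not (s := partitionMultisets n)
    fun s => ∀ i ∈ s, ¬ 6 ∣ i
  have hirreg := card_filter_add_card_filter_not
    (s := (partitionMultisets n).filter fun s => ¬ ∀ i ∈ s, ¬ 6 ∣ i) (6 ∈ ·)
  have hwith : (partitionMultisets n).filter (fun s => (¬ ∀ i ∈ s, ¬ 6 ∣ i) ∧ 6 ∈ s) =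
      (partitionMultisets n).filter (6 ∈ ·) :=
    filter_congr fun s _ => ⟨fun h => h.2, fun h => ⟨fun hall => hall 6 h dvd_rfl, h⟩⟩
  have hwithout : (partitionMultisets n).filter (fun s => (¬ ∀ i ∈ s, ¬ 6 ∣ i) ∧ 6 ∉ s) =
      (partitionMultisets n).filter HasSixMultipleNotSix :=
    filter_congr fun s _ => by simp [HasSixMultipleNotSix, and_comm]
  rw [filter_filter, filter_filter, hwith, hwithout] at hirreg
  rw [b6_eq_card_filter, ← card_partitionMultisets, ← hreg, ← hirreg, add_assoc]

theorem stmt19 (n : ℕ) :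
    pz (n : ℤ) - pz ((n : ℤ) - 6) - pz ((n : ℤ) - 12) + pz ((n : ℤ) - 30) ≤ (b6 n : ℤ) ∧
    (b6 n : ℤ) ≤ pz (n : ℤ) - pz ((n : ℤ) - 6) := by
  have hp := pnat_eq_b6_add n
  have hsix : (#((partitionMultisets n).filter (6 ∈ ·)) : ℤ) = pz (n - 6) := by
    simpa [Multiset.one_le_count_iff_mem] using card_filter_le_count (a := 6) (by norm_num) 1 n
  have hrest := card_filter_hasSixMultipleNotSix_add_le n
  rw [pz_natCast]
  constructor <;> omega
end
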